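/- arXiv:math/0605385 — 2 statements merged into one kernel-verified Lean document; each statement's English description precedes it below -/
import Mathlib

section
/- Let κ be a regular uncountable cardinal, let D be a normal filter on κ, and let f : κ → Ord. Then J[f,D] := {Z ⊆ κ : κ∖Z ∈ D, or (Z ∉ D and rk_{D+Z}(f) > rk_D(f))} is a normal ideal on κ disjoint from D; in particular J[f,D] is downward closed, closed under diagonal unions ∇_{i<κ} A_i = {j < κ : ∃ i < j, j ∈ A_i} of κ-sequences of its members, and no member of J[f,D] belongs to D. -/
open scoped Classical

open Cardinal

/-- The set of ordinals below `κ`, as a type. -/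
def below (κ : Cardinal) : Type _ := {α : Ordinal // α < κ.ord}

/-- `g <_D f` iff `{y : g y < f y} ∈ D`. -/
def ltD {Y : Type*} (D : Filter Y) (g f : Y → Ordinal) : Prop :=
  {y | g y < f y} ∈ D

/-- The rank `rk_D(f)` of `f : Y → Ord` in the well-founded relation `<_D`
(defined as `0` in the degenerate case where `<_D` is not well-founded). -/
noncomputable def rkD {Y : Type*} (D : Filter Y) (f : Y → Ordinal) : Ordinal :=
  if h : WellFounded (ltD D) then (h.apply f).rank else 0

/-- `J[f,D] = {Z ⊆ Y : Y∖Z ∈ D, or (Z ∉ D and rk_{D+Z}(f) > rk_D(f))}`,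
where `D+Z` is the filter generated by `D ∪ {Z}`. -/
noncomputable def JfD {Y : Type*} (D : Filter Y) (f : Y → Ordinal) : Set (Set Y) :=
  {Z | Zᶜ ∈ D ∨ (Z ∉ D ∧ rkD D f < rkD (D ⊓ Filter.principal Z) f)}

/-
A rank increase `rk_D f < rk_{D+Z} f` survives diagonal unions: if `Z = ∇ A` is `D`-positive,
choose for each `j ∈ Z` some `i < j` with `j ∈ A i`. On each positive fibre of this regressive
choice function the rank of `f` is already above `rk_D f`. Witnesses for the rank, chosen
fibrewise, glue to a single function, and closure of `D` under diagonal intersections makes the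
glued function `<_{D+Z}`-below the original; so the ranks on the fibres bound the rank on `Z`.
Well-foundedness of all the `<_{D+Z}` comes from countable completeness of `D`, which normality
gives because `κ` is uncountable.
-/

open Filter

universe u v

section Rank

variable {Y : Type u} {F G : Filter Y} {f g : Y → Ordinal.{v}} {η : Ordinal.{max u (v + 1)}}

theorem wellFounded_ltD (F : Filter Y) [CountableInterFilter F] [F.NeBot] :
    @WellFounded (Y → Ordinal.{v}) (ltD F) := by
  refine wellFounded_iff_isEmpty_descending_chain.2 ⟨fun ⟨s, hs⟩ => ?_⟩
  obtain ⟨y, hy⟩ := nonempty_of_mem (countable_iInter_mem.2 hs)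
  exact (wellFounded_iff_isEmpty_descending_chain.1 Ordinal.lt_wf).false
    ⟨fun n => s n y, Set.mem_iInter.1 hy⟩

theorem wellFounded_ltD_inf_principal [CountableInterFilter F] {Z : Set Y} (hZ : Zᶜ ∉ F) :
    @WellFounded (Y → Ordinal.{v}) (ltD (F ⊓ 𝓟 Z)) :=
  haveI : (F ⊓ 𝓟 Z).NeBot := ⟨mt inf_principal_eq_bot.1 hZ⟩
  wellFounded_ltD _

theorem lt_rkD_iff (hwf : @WellFounded (Y → Ordinal.{v}) (ltD F)) :
    η < rkD F f ↔ ∃ g, ltD F g f ∧ η ≤ rkD F g := by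
  simp only [rkD, dif_pos hwf]
  rw [Acc.rank_eq, Ordinal.lt_iSup_iff]
  simp only [Subtype.exists, Order.lt_succ_iff]
  exact exists_congr fun g => ⟨fun ⟨hg, hη⟩ => ⟨hg, hη⟩, fun ⟨hg, hη⟩ => ⟨hg, hη⟩⟩

theorem rkD_le_rkD_of_forall (hwf : @WellFounded (Y → Ordinal.{v}) (ltD F))
    (H : ∀ h, ltD F h f → ltD F h g) : rkD F f ≤ rkD F g :=
  le_of_forall_lt fun _η hη =>
    let ⟨h, hhf, hη'⟩ := (lt_rkD_iff hwf).1 hη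
    (lt_rkD_iff hwf).2 ⟨h, H h hhf, hη'⟩

theorem ltD_of_eventuallyEq {h : Y → Ordinal.{v}} (hfg : f =ᶠ[F] g) (hhf : ltD F h f) :
    ltD F h g :=
  mem_of_superset (inter_mem hhf hfg) fun y ⟨hlt, heq⟩ =>
    show h y < g y from (show f y = g y from heq) ▸ hlt

theorem rkD_congr (hwf : @WellFounded (Y → Ordinal.{v}) (ltD F)) (hfg : f =ᶠ[F] g) :
    rkD F f = rkD F g :=
  (rkD_le_rkD_of_forall hwf fun _ => ltD_of_eventuallyEq hfg).antisymm
    (rkD_le_rkD_of_forall hwf fun _ => ltD_of_eventuallyEq hfg.symm)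

theorem rkD_antitone (hFG : F ≤ G) (hF : @WellFounded (Y → Ordinal.{v}) (ltD F))
    (f : Y → Ordinal.{v}) : rkD G f ≤ rkD F f := by
  have hG : @WellFounded (Y → Ordinal.{v}) (ltD G) := Subrelation.wf (fun h => hFG h) hF
  induction f using hG.induction with
  | _ f ih =>
    refine le_of_forall_lt fun η hη => ?_
    obtain ⟨g, hgf, hη'⟩ := (lt_rkD_iff hG).1 hη
    exact (lt_rkD_iff hF).2 ⟨g, hFG hgf, hη'.trans (ih g hgf)⟩

end Rank

section Ideal

variable {Y : Type u} {D : Filter Y} {f : Y → Ordinal.{v}} {Z W : Set Y}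

theorem mem_JfD_iff_of_compl_notMem (hZ : Zᶜ ∉ D) :
    Z ∈ JfD D f ↔ rkD D f < rkD (D ⊓ 𝓟 Z) f := by
  refine (or_iff_right hZ).trans ⟨And.right, fun h => ⟨fun hZD => ?_, h⟩⟩
  rw [inf_eq_left.2 (le_principal_iff.2 hZD)] at h
  exact h.false

theorem mem_JfD_of_subset [CountableInterFilter D] (hZ : Z ∈ JfD D f) (hWZ : W ⊆ Z) :
    W ∈ JfD D f := by
  by_cases hW : Wᶜ ∈ D
  · exact Or.inl hW
  have hZ' : Zᶜ ∉ D := fun h => hW (mem_of_superset h (Set.compl_subset_compl.2 hWZ))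
  rw [mem_JfD_iff_of_compl_notMem hW]
  exact ((mem_JfD_iff_of_compl_notMem hZ').1 hZ).trans_le
    (rkD_antitone (inf_le_inf_left D (principal_mono.2 hWZ)) (wellFounded_ltD_inf_principal hW) f)

theorem notMem_of_mem_JfD [D.NeBot] (hZ : Z ∈ JfD D f) : Z ∉ D := by
  rcases hZ with hZc | ⟨hZ, -⟩
  · exact fun hZD => compl_notMem hZD hZc
  · exact hZ

end Ideal

section Normal

variable {κ : Cardinal.{u}} {D : Filter (below κ)}

def IsDiagInterClosed (D : Filter (below κ)) : Prop :=
  ∀ A : below κ → Set (below κ), (∀ i, A i ∈ D) →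
    {j : below κ | ∀ i : below κ, i.1 < j.1 → j ∈ A i} ∈ D

theorem countableInterFilter_of_isDiagInterClosed (hunc : ℵ₀ < κ)
    (htail : ∀ α : Ordinal, α < κ.ord → {β : below κ | α ≤ β.1} ∈ D)
    (hdiag : IsDiagInterClosed D) : CountableInterFilter D := by
  have hω : Ordinal.omega0 < κ.ord := by simpa using Cardinal.ord_lt_ord.2 hunc
  refine ⟨fun S hSc hS => ?_⟩
  rcases S.eq_empty_or_nonempty with rfl | hSne
  · simp
  obtain ⟨s, rfl⟩ := hSc.exists_eq_range hSne
  -- the `i`-th set is `s n` if `i` is the natural number `n`, and `univ` otherwise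
  have hA : ∀ i : below κ, (⋂ n ∈ {n : ℕ | (n : Ordinal) = i.1}, s n) ∈ D := fun i =>
    (biInter_mem (Set.Subsingleton.finite fun m hm n hn => Nat.cast_injective (hm.trans hn.symm))).2
      fun n _ => hS _ (Set.mem_range_self n)
  refine mem_of_superset (inter_mem (hdiag _ hA) (htail _ hω)) fun j ⟨hj, hjω⟩ => ?_
  rw [Set.sInter_range, Set.mem_iInter]
  intro n
  have hn : (n : Ordinal) < κ.ord := (Ordinal.natCast_lt_omega0 n).trans hω
  exact Set.mem_iInter₂.1 (hj ⟨n, hn⟩ ((Ordinal.natCast_lt_omega0 n).trans_le hjω)) n rfl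

theorem le_rkD_inf_principal_of_fibres [CountableInterFilter D] (hdiag : IsDiagInterClosed D)
    {Z : Set (below κ)} (hZ : Zᶜ ∉ D) (sel : below κ → below κ)
    (hsel : ∀ j ∈ Z, (sel j).1 < j.1) {ξ : Ordinal} {g : below κ → Ordinal.{v}}
    (hfib : ∀ i, (Z ∩ sel ⁻¹' {i})ᶜ ∉ D → ξ ≤ rkD (D ⊓ 𝓟 (Z ∩ sel ⁻¹' {i})) g) :
    ξ ≤ rkD (D ⊓ 𝓟 Z) g := by
  induction ξ using WellFoundedLT.induction generalizing g with
  | _ ξ ih =>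
  refine le_of_forall_lt fun η hη => (lt_rkD_iff (wellFounded_ltD_inf_principal hZ)).2 ?_
  have hwit : ∀ i, ∃ G : below κ → Ordinal.{v}, ltD (D ⊓ 𝓟 (Z ∩ sel ⁻¹' {i})) G g ∧
      ((Z ∩ sel ⁻¹' {i})ᶜ ∉ D → η ≤ rkD (D ⊓ 𝓟 (Z ∩ sel ⁻¹' {i})) G) := by
    intro i
    by_cases hi : (Z ∩ sel ⁻¹' {i})ᶜ ∈ D
    -- on a null fibre `D + Z_i = ⊥`, so `g` itself will do
    · refine ⟨g, ?_, absurd hi⟩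
      rw [inf_principal_eq_bot.2 hi]
      exact mem_bot
    · obtain ⟨G, hG, hηG⟩ :=
        (lt_rkD_iff (wellFounded_ltD_inf_principal hi)).1 (hη.trans_le (hfib i hi))
      exact ⟨G, hG, fun _ => hηG⟩
  choose G hGg hηG using hwit
  refine ⟨fun j => G (sel j) j, ?_, ih η hη fun i hi => ?_⟩
  · rw [ltD, mem_inf_principal]
    exact mem_of_superset (hdiag _ fun i => mem_inf_principal.1 (hGg i))
      fun j hj hjZ => hj (sel j) (hsel j hjZ) ⟨hjZ, rfl⟩
  · rw [rkD_congr (wellFounded_ltD_inf_principal hi) (g := G i)]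
    · exact hηG i hi
    · exact mem_inf_principal.2 (univ_mem' fun j ⟨_, hj⟩ => by simp_all)

theorem diagUnion_mem_JfD [CountableInterFilter D] (hdiag : IsDiagInterClosed D)
    {f : below κ → Ordinal.{v}} {A : below κ → Set (below κ)} (hA : ∀ i, A i ∈ JfD D f) :
    {j : below κ | ∃ i : below κ, i.1 < j.1 ∧ j ∈ A i} ∈ JfD D f := by
  set Z := {j : below κ | ∃ i : below κ, i.1 < j.1 ∧ j ∈ A i}
  by_cases hZ : Zᶜ ∈ D
  · exact Or.inl hZ
  obtain ⟨j₀, -⟩ : Z.Nonempty := Set.nonempty_iff_ne_empty.2 fun h => hZ (by simp [h])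
  have : Nonempty (below κ) := ⟨j₀⟩
  choose! sel hsel using fun j (hj : j ∈ Z) => hj
  rw [mem_JfD_iff_of_compl_notMem hZ, ← Order.succ_le_iff]
  refine le_rkD_inf_principal_of_fibres hdiag hZ sel (fun j hj => (hsel j hj).1) fun i hi => ?_
  have hsub : Z ∩ sel ⁻¹' {i} ⊆ A i := fun j ⟨hj, hji⟩ => hji ▸ (hsel j hj).2
  exact Order.succ_le_of_lt ((mem_JfD_iff_of_compl_notMem hi).1 (mem_JfD_of_subset (hA i) hsub))

end Normal

theorem JfD_normal_ideal_general (κ : Cardinal) (hunc : ℵ₀ < κ)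
    (D : Filter (below κ)) (hproper : D.NeBot)
    (htail : ∀ α : Ordinal, α < κ.ord → {β : below κ | α ≤ β.1} ∈ D)
    (hdiag : ∀ A : below κ → Set (below κ), (∀ i, A i ∈ D) →
      {j : below κ | ∀ i : below κ, i.1 < j.1 → j ∈ A i} ∈ D)
    (f : below κ → Ordinal) :
    ∅ ∈ JfD D f ∧
    (∀ Z : Set (below κ), (∃ α < κ.ord, ∀ β ∈ Z, β.1 < α) → Z ∈ JfD D f) ∧
    (∀ Z ∈ JfD D f, ∀ W : Set (below κ), W ⊆ Z → W ∈ JfD D f) ∧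
    (∀ A : below κ → Set (below κ), (∀ i, A i ∈ JfD D f) →
      {j : below κ | ∃ i : below κ, i.1 < j.1 ∧ j ∈ A i} ∈ JfD D f) ∧
    (∀ Z ∈ JfD D f, Z ∉ D) := by
  have := countableInterFilter_of_isDiagInterClosed hunc htail hdiag
  refine ⟨Or.inl (by simp), fun Z ⟨α, hα, hZα⟩ => Or.inl ?_,
    fun Z hZ W hWZ => mem_JfD_of_subset hZ hWZ, fun A hA => diagUnion_mem_JfD hdiag hA,
    fun Z hZ => notMem_of_mem_JfD hZ⟩
  exact mem_of_superset (htail α hα) fun β hβ hβZ => (hZα β hβZ).not_ge hβ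

/-- If `κ` is regular uncountable and `D` is a normal filter on `κ` (proper, containing all
tail sets, closed under diagonal intersections), then `J[f,D]` is a normal ideal on `κ`
disjoint from `D`: it contains `∅` and every bounded subset of `κ`, is downward closed,
is closed under diagonal unions, and no member of it lies in `D`. -/
theorem JfD_normal_ideal (κ : Cardinal) (hreg : κ.IsRegular) (hunc : ℵ₀ < κ)
    (D : Filter (below κ)) (hproper : D.NeBot)
    (htail : ∀ α : Ordinal, α < κ.ord → {β : below κ | α ≤ β.1} ∈ D)
    (hdiag : ∀ A : below κ → Set (below κ), (∀ i, A i ∈ D) →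
      {j : below κ | ∀ i : below κ, i.1 < j.1 → j ∈ A i} ∈ D)
    (f : below κ → Ordinal) :
    ∅ ∈ JfD D f ∧
    (∀ Z : Set (below κ), (∃ α < κ.ord, ∀ β ∈ Z, β.1 < α) → Z ∈ JfD D f) ∧
    (∀ Z ∈ JfD D f, ∀ W : Set (below κ), W ⊆ Z → W ∈ JfD D f) ∧
    (∀ A : below κ → Set (below κ), (∀ i, A i ∈ JfD D f) →
      {j : below κ | ∃ i : below κ, i.1 < j.1 ∧ j ∈ A i} ∈ JfD D f) ∧
    (∀ Z ∈ JfD D f, Z ∉ D) :=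
  JfD_normal_ideal_general κ hunc D hproper htail hdiag f
end

section
/- Let κ > ℵ₀ be a regular cardinal, let D be a κ-complete (proper) filter on a set Y, let f : Y → Ord, and let Z ⊆ Y be a set that is positive with respect to the dual filter of J[f,D], i.e. Z ∉ J[f,D] and Y∖Z ∉ D. Then rk_{D+Z}(f) = rk_D(f). -/
/-!
Since `D ≤ D+Z`, every instance of `<_D` is an instance of `<_{D+Z}`, so ranks can only grow
when passing to `D+Z`, provided `<_{D+Z}` is well-founded. It is, because `D+Z` is proper
(`Y∖Z ∉ D`) and, like `D`, closed under countable intersections (`κ > ℵ₀`). The reverse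
inequality is exactly what `Z ∉ J[f,D]` says when `Z ∉ D`; when `Z ∈ D` we have `D+Z = D`.
-/

open scoped Classical

open Cardinal

open Filter

universe u

theorem Acc.rank_le_rank_of_subrelation {α : Type*} {r r' : α → α → Prop}
    (hsub : ∀ ⦃a b⦄, r a b → r' a b) {a : α} (ha : Acc r a) (ha' : Acc r' a) :
    ha.rank ≤ ha'.rank := by
  induction ha' with
  | intro a ha' ih =>
    rw [Acc.rank_eq]
    exact Ordinal.iSup_le fun ⟨b, hb⟩ =>
      Order.succ_le_of_lt <| (ih b (hsub hb) _).trans_lt (Acc.rank_lt_of_rel _ (hsub hb))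

section

variable {Y : Type*}

theorem wellFounded_ltD_s9 (D : Filter Y) [D.NeBot] [CountableInterFilter D] :
    WellFounded (ltD D : (Y → Ordinal.{u}) → (Y → Ordinal.{u}) → Prop) := by
  rw [wellFounded_iff_isEmpty_descending_chain]
  refine ⟨fun ⟨g, hg⟩ => ?_⟩
  obtain ⟨y, hy⟩ := (eventually_countable_forall.2 hg).exists
  exact (RelEmbedding.natGT (fun n => g n y) hy).not_wellFounded Ordinal.lt_wf

/-- Only `<_{D'}` needs to be well-founded: otherwise `<_D` is not either, and `rkD D f = 0`. -/
theorem rkD_le_rkD_of_le {D D' : Filter Y} (h : D' ≤ D)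
    (hwf : WellFounded (ltD D' : (Y → Ordinal.{u}) → (Y → Ordinal.{u}) → Prop))
    (f : Y → Ordinal.{u}) : rkD D f ≤ rkD D' f := by
  rw [rkD, rkD, dif_pos hwf]
  split_ifs
  · exact Acc.rank_le_rank_of_subrelation (fun _ _ hlt => h hlt) _ _
  · exact zero_le

theorem rkD_inf_principal_le_of_notMem_JfD {D : Filter Y} {f : Y → Ordinal} {Z : Set Y}
    (hZ : Z ∉ JfD D f) (hZD : Z ∉ D) : rkD (D ⊓ 𝓟 Z) f ≤ rkD D f :=
  not_lt.1 fun hlt => hZ (Or.inr ⟨hZD, hlt⟩)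

end

theorem rkD_restrict_eq_of_positive_general {Y : Type*} (κ : Cardinal) (hκ : ℵ₀ < κ)
    (D : Filter Y)
    (hcomplete : ∀ s : Set (Set Y), (∀ A ∈ s, A ∈ D) → #s < κ → ⋂₀ s ∈ D)
    (f : Y → Ordinal) (Z : Set Y) (hZ : Z ∉ JfD D f) (hZ' : Zᶜ ∉ D) :
    rkD (D ⊓ Filter.principal Z) f = rkD D f := by
  by_cases hZD : Z ∈ D
  · rw [inf_eq_left.2 (le_principal_iff.2 hZD)]
  have : CardinalInterFilter D κ := ⟨fun s hs hmem => hcomplete s hmem hs⟩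
  have := CardinalInterFilter.toCountableInterFilter D hκ
  have : (D ⊓ 𝓟 Z).NeBot := ⟨fun hbot => hZ' (inf_principal_eq_bot.1 hbot)⟩
  exact le_antisymm (rkD_inf_principal_le_of_notMem_JfD hZ hZD)
    (rkD_le_rkD_of_le inf_le_left (wellFounded_ltD_s9 _) f)

/-- If `κ > ℵ₀` is regular, `D` is a proper `κ`-complete filter on `Y`, and `Z` is positive
for the dual filter of `J[f,D]` (i.e. `Z ∉ J[f,D]` and `Y∖Z ∉ D`), then
`rk_{D+Z}(f) = rk_D(f)`. -/
theorem rkD_restrict_eq_of_positive {Y : Type*} (κ : Cardinal) (hκ : ℵ₀ < κ)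
    (hreg : κ.IsRegular) (D : Filter Y) (hproper : D.NeBot)
    (hcomplete : ∀ s : Set (Set Y), (∀ A ∈ s, A ∈ D) → #s < κ → ⋂₀ s ∈ D)
    (f : Y → Ordinal) (Z : Set Y) (hZ : Z ∉ JfD D f) (hZ' : Zᶜ ∉ D) :
    rkD (D ⊓ Filter.principal Z) f = rkD D f :=
  rkD_restrict_eq_of_positive_general κ hκ D hcomplete f Z hZ hZ'
end
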